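/- arXiv:2005.06691 — 5 statements merged into one kernel-verified Lean document; each statement's English description precedes it below -/
import Mathlib

section
/- For a permutation Π of [n] with preference relations: if Π is stable (i.e., there is no pair i, j with i ≠ j and i ≠ Π(j), such that i prefers Π(j) to Π(i) and Π(j) prefers i to j), then the inverse permutation Π⁻¹ is also stable. -/
/-- `pref i j k` means agent `i` strictly prefers agent `j` to agent `k`. -/
def IsStablePerm {n : ℕ} (pref : Fin n → Fin n → Fin n → Prop)
    (σ : Equiv.Perm (Fin n)) : Prop :=
  ¬ ∃ i j : Fin n, i ≠ j ∧ i ≠ σ j ∧ pref i (σ j) (σ i) ∧ pref (σ j) i j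

theorem inverse_of_stable_is_stable_general {n : ℕ}
    (pref : Fin n → Fin n → Fin n → Prop)
    (σ : Equiv.Perm (Fin n)) (hσ : IsStablePerm pref σ) :
    IsStablePerm pref σ.symm := by
  rintro ⟨i, j, hij, hi, hi_pref, hj_pref⟩
  -- A blocking pair `(i, j)` of `σ⁻¹` is the blocking pair `(σ⁻¹ j, σ⁻¹ i)` of `σ`, with roles swapped.
  refine hσ ⟨σ.symm j, σ.symm i, fun h => hij (σ.symm.injective h).symm, ?_, ?_, ?_⟩
  · simpa [eq_comm] using hi
  · simpa using hj_pref
  · simpa using hi_pref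

/-- If `σ` is stable then so is its inverse `σ⁻¹`. -/
theorem inverse_of_stable_is_stable {n : ℕ}
    (pref : Fin n → Fin n → Fin n → Prop)
    (hirr : ∀ i j, ¬ pref i j j)
    (hasymm : ∀ i j k, pref i j k → ¬ pref i k j)
    (htrans : ∀ i j k l, pref i j k → pref i k l → pref i j l)
    (htotal : ∀ i j k, j ≠ k → j ≠ i → k ≠ i → pref i j k ∨ pref i k j)
    (σ : Equiv.Perm (Fin n)) (hσ : IsStablePerm pref σ) :
    IsStablePerm pref σ.symm :=
  inverse_of_stable_is_stable_general pref σ hσ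
end

section
/- If Π is a stable permutation of [n] and i is a fixed point of Π (i.e., Π(i) = i), then for every j ≠ i, Π(j) prefers j to i; consequently Π has no other fixed point, i.e., a stable permutation has at most one fixed point. -/
namespace IsStablePerm

variable {n : ℕ} {pref : Fin n → Fin n → Fin n → Prop} {σ : Equiv.Perm (Fin n)}

theorem not_pref_of_pref (hσ : IsStablePerm pref σ) {i j : Fin n} (hij : i ≠ j)
    (hiσj : i ≠ σ j) (hi : pref i (σ j) (σ i)) : ¬ pref (σ j) i j :=
  fun hσj => hσ ⟨i, j, hij, hiσj, hi, hσj⟩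

/-- Two fixed points would be a blocking pair: each prefers the other to itself. -/
theorem eq_of_apply_eq_self (hσ : IsStablePerm pref σ) (hself : ∀ i j, j ≠ i → pref i j i)
    {i j : Fin n} (hi : σ i = i) (hj : σ j = j) : j = i := by
  by_contra hji
  refine hσ.not_pref_of_pref (Ne.symm hji) (by rwa [hj, ne_comm]) ?_ ?_
  · rw [hi, hj]
    exact hself i j hji
  · rw [hj]
    exact hself j i (Ne.symm hji)

/-- Otherwise `i`, who prefers anyone to itself, and `j` would block `σ`. -/
theorem pref_apply_of_apply_eq_self (hσ : IsStablePerm pref σ)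
    (htotal : ∀ i j k, j ≠ k → j ≠ i → k ≠ i → pref i j k ∨ pref i k j)
    (hself : ∀ i j, j ≠ i → pref i j i) {i j : Fin n} (hi : σ i = i) (hji : j ≠ i) :
    pref (σ j) j i := by
  have hσj_ne_j : σ j ≠ j := fun hj => hji (hσ.eq_of_apply_eq_self hself hi hj)
  have hi_ne_σj : i ≠ σ j := fun h => hji (σ.injective (by rw [← h, hi]))
  have hblock : ¬ pref (σ j) i j :=
    hσ.not_pref_of_pref (Ne.symm hji) hi_ne_σj (by rw [hi]; exact hself i (σ j) hi_ne_σj.symm)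
  exact (htotal (σ j) j i hji hσj_ne_j.symm hi_ne_σj).resolve_right hblock

end IsStablePerm

theorem fixedPoint_unique_of_stable_general {n : ℕ}
    (pref : Fin n → Fin n → Fin n → Prop)
    (htotal : ∀ i j k, j ≠ k → j ≠ i → k ≠ i → pref i j k ∨ pref i k j)
    (hself : ∀ i j, j ≠ i → pref i j i)
    (σ : Equiv.Perm (Fin n)) (hσ : IsStablePerm pref σ)
    (i : Fin n) (hfix : σ i = i) :
    (∀ j, j ≠ i → pref (σ j) j i) ∧ (∀ j, σ j = j → j = i) :=
  ⟨fun _ hj => hσ.pref_apply_of_apply_eq_self htotal hself hfix hj,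
    fun _ hj => hσ.eq_of_apply_eq_self hself hfix hj⟩

/-- If a stable permutation has a fixed point `i`, then every agent `σ j` with
`j ≠ i` prefers `j` to `i`, and `i` is the unique fixed point. -/
theorem fixedPoint_unique_of_stable {n : ℕ}
    (pref : Fin n → Fin n → Fin n → Prop)
    (hirr : ∀ i j, ¬ pref i j j)
    (hasymm : ∀ i j k, pref i j k → ¬ pref i k j)
    (htrans : ∀ i j k l, pref i j k → pref i k l → pref i j l)
    (htotal : ∀ i j k, j ≠ k → j ≠ i → k ≠ i → pref i j k ∨ pref i k j)
    (hself : ∀ i j, j ≠ i → pref i j i)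
    (σ : Equiv.Perm (Fin n)) (hσ : IsStablePerm pref σ)
    (i : Fin n) (hfix : σ i = i) :
    (∀ j, j ≠ i → pref (σ j) j i) ∧ (∀ j, σ j = j → j = i) :=
  fixedPoint_unique_of_stable_general pref htotal hself σ hσ i hfix
end

section
/- Let Π be a stable permutation of [n] and C a cycle of Π of length at least 3. Then exactly one of the following holds: every i ∈ C prefers its successor Π(i) to its predecessor Π⁻¹(i), or every i ∈ C prefers its predecessor Π⁻¹(i) to its successor Π(i). -/
namespace Equiv.Perm

variable {α : Type*} {σ : Perm α} {x y : α}

theorem SameCycle.exists_pow_lt_eq_of_pow_apply_eq {k : ℕ} (hk : 0 < k) (hx : (σ ^ k) x = x)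
    (h : σ.SameCycle x y) : ∃ i < k, (σ ^ i) x = y := by
  obtain ⟨m, rfl⟩ := h
  have hk' : (0 : ℤ) < k := by exact_mod_cast hk
  have hmod := Int.emod_nonneg m hk'.ne'
  refine ⟨(m % k).toNat, by have := Int.emod_lt_of_pos m hk'; omega, ?_⟩
  have hper : (σ ^ ((k : ℤ) * (m / k))) x = x := by
    rw [zpow_mul, zpow_natCast]
    exact zpow_apply_eq_self_of_apply_eq_self hx _
  rw [← zpow_natCast, Int.toNat_of_nonneg hmod]
  conv_rhs => rw [← Int.emod_add_mul_ediv m k, zpow_add, mul_apply, hper]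

theorem ncard_sameCycle_le_of_pow_apply_eq {k : ℕ} (hk : 0 < k) (hx : (σ ^ k) x = x) :
    {y | σ.SameCycle x y}.ncard ≤ k := by
  classical
  calc {y | σ.SameCycle x y}.ncard
      ≤ (((Finset.range k).image fun i => (σ ^ i) x : Finset α) : Set α).ncard := by
        refine Set.ncard_le_ncard (fun y hy => ?_) (Finset.finite_toSet _)
        obtain ⟨i, hi, rfl⟩ := SameCycle.exists_pow_lt_eq_of_pow_apply_eq hk hx hy
        simpa using ⟨i, hi, rfl⟩
    _ ≤ k := by
        rw [Set.ncard_coe_finset]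
        exact Finset.card_image_le.trans (Finset.card_range k).le

theorem SameCycle.pow_apply_ne_self {x₀ : α} {k : ℕ} (hx : σ.SameCycle x₀ x) (hk : 0 < k)
    (hcard : k < {y | σ.SameCycle x₀ y}.ncard) : (σ ^ k) x ≠ x := by
  have hcyc : {y | σ.SameCycle x₀ y} = {y | σ.SameCycle x y} :=
    Set.ext fun _ => ⟨hx.symm.trans, hx.trans⟩
  rw [hcyc] at hcard
  exact fun h => (ncard_sameCycle_le_of_pow_apply_eq hk h).not_gt hcard

theorem SameCycle.apply_ne_self {x₀ : α} (hx : σ.SameCycle x₀ x)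
    (hcard : 1 < {y | σ.SameCycle x₀ y}.ncard) : σ x ≠ x := by
  simpa using hx.pow_apply_ne_self one_pos hcard

theorem SameCycle.apply_apply_ne_self {x₀ : α} (hx : σ.SameCycle x₀ x)
    (hcard : 2 < {y | σ.SameCycle x₀ y}.ncard) : σ (σ x) ≠ x := by
  simpa [sq] using hx.pow_apply_ne_self two_pos hcard

theorem SameCycle.of_forall_apply_imp [Finite α] {P : α → Prop}
    (hP : ∀ z, σ.SameCycle x z → P (σ z) → P z) (hx : P x) (hy : σ.SameCycle x y) : P y := by
  obtain ⟨k, hk⟩ := hy.symm.exists_nat_pow_eq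
  induction k generalizing y with
  | zero => simpa [← hk] using hx
  | succ k ih =>
    refine hP y hy (ih (hy.trans (SameCycle.refl σ y).apply_right) ?_)
    rwa [pow_succ, mul_apply] at hk

end Equiv.Perm

section Stable

variable {n : ℕ} {pref : Fin n → Fin n → Fin n → Prop} {σ : Equiv.Perm (Fin n)} {x₀ x : Fin n}

theorem pref_apply_or_pref_symm_apply
    (htotal : ∀ i j k, j ≠ k → j ≠ i → k ≠ i → pref i j k ∨ pref i k j)
    (hcard : 3 ≤ {y | σ.SameCycle x₀ y}.ncard) (hx : σ.SameCycle x₀ x) :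
    pref x (σ x) (σ.symm x) ∨ pref x (σ.symm x) (σ x) :=
  htotal x _ _ (fun h => hx.apply_apply_ne_self hcard (by rw [h, Equiv.apply_symm_apply]))
    (hx.apply_ne_self (by omega))
    (fun h => hx.apply_ne_self (by omega) (Equiv.symm_apply_eq σ |>.mp h).symm)

theorem IsStablePerm.pref_symm_of_pref_symm_apply (hσ : IsStablePerm pref σ)
    (htotal : ∀ i j k, j ≠ k → j ≠ i → k ≠ i → pref i j k ∨ pref i k j)
    (hcard : 3 ≤ {y | σ.SameCycle x₀ y}.ncard) (hx : σ.SameCycle x₀ x)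
    (h : pref (σ x) x (σ (σ x))) : pref x (σ.symm x) (σ x) := by
  refine (pref_apply_or_pref_symm_apply htotal hcard hx).resolve_left fun hfwd => hσ ?_
  refine ⟨σ x, σ.symm x, fun h' => hx.apply_apply_ne_self hcard ?_,
    by simpa using hx.apply_ne_self (by omega), by simpa using h, by simpa using hfwd⟩
  rw [h', Equiv.apply_symm_apply]

theorem IsStablePerm.pref_symm_of_sameCycle (hσ : IsStablePerm pref σ)
    (htotal : ∀ i j k, j ≠ k → j ≠ i → k ≠ i → pref i j k ∨ pref i k j)
    (hcard : 3 ≤ {y | σ.SameCycle x₀ y}.ncard) {y : Fin n} (hx : σ.SameCycle x₀ x)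
    (hy : σ.SameCycle x₀ y) (hpx : pref x (σ.symm x) (σ x)) : pref y (σ.symm y) (σ y) := by
  refine Equiv.Perm.SameCycle.of_forall_apply_imp (P := fun z => pref z (σ.symm z) (σ z))
    (fun z hz hPz => ?_) hpx (hx.symm.trans hy)
  simp only [Equiv.symm_apply_apply] at hPz
  exact hσ.pref_symm_of_pref_symm_apply htotal hcard (hx.trans hz) hPz

end Stable

theorem cycle_orientation_of_stable_general {n : ℕ}
    (pref : Fin n → Fin n → Fin n → Prop)
    (hasymm : ∀ i j k, pref i j k → ¬ pref i k j)
    (htotal : ∀ i j k, j ≠ k → j ≠ i → k ≠ i → pref i j k ∨ pref i k j)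
    (σ : Equiv.Perm (Fin n)) (hσ : IsStablePerm pref σ)
    (i₀ : Fin n) (C : Set (Fin n)) (hC : C = {j | σ.SameCycle i₀ j})
    (hcard : 3 ≤ C.ncard) :
    Xor' (∀ i ∈ C, pref i (σ i) (σ.symm i)) (∀ i ∈ C, pref i (σ.symm i) (σ i)) := by
  subst hC
  have hi₀ : σ.SameCycle i₀ i₀ := .refl σ i₀
  by_cases hback : ∀ i ∈ {j | σ.SameCycle i₀ j}, pref i (σ.symm i) (σ i)
  · exact .inr ⟨hback, fun hfwd => hasymm _ _ _ (hfwd i₀ hi₀) (hback i₀ hi₀)⟩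
  · push Not at hback
    obtain ⟨i, hi, hnot⟩ := hback
    refine .inl ⟨fun j hj => ?_, fun hback => hnot (hback i hi)⟩
    exact (pref_apply_or_pref_symm_apply htotal hcard hj).resolve_right
      fun hj' => hnot (hσ.pref_symm_of_sameCycle htotal hcard hj hi hj')

/-- On any cycle of length at least 3 of a stable permutation, either every agent
prefers its successor to its predecessor, or every agent prefers its predecessor
to its successor (exactly one of the two alternatives holds). -/
theorem cycle_orientation_of_stable {n : ℕ}
    (pref : Fin n → Fin n → Fin n → Prop)
    (hirr : ∀ i j, ¬ pref i j j)
    (hasymm : ∀ i j k, pref i j k → ¬ pref i k j)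
    (htrans : ∀ i j k l, pref i j k → pref i k l → pref i j l)
    (htotal : ∀ i j k, j ≠ k → j ≠ i → k ≠ i → pref i j k ∨ pref i k j)
    (σ : Equiv.Perm (Fin n)) (hσ : IsStablePerm pref σ)
    (i₀ : Fin n) (C : Set (Fin n)) (hC : C = {j | σ.SameCycle i₀ j})
    (hcard : 3 ≤ C.ncard) :
    Xor' (∀ i ∈ C, pref i (σ i) (σ.symm i)) (∀ i ∈ C, pref i (σ.symm i) (σ i)) :=
  cycle_orientation_of_stable_general pref hasymm htotal σ hσ i₀ C hC hcard
end

section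
/- In the terminal state of the one-sided proposal algorithm, the set of terminal successors equals the set of terminal predecessors, and this common set has cardinality n−1 or n. -/
/-!
The map sending a predecessor to the holder of its proposal is a bijection `P → S`, so
`|S| = |P|`. If some agent `i` is not a predecessor, every other agent has rejected it and
therefore holds a proposal; thus `S` contains all agents but `i` while `P` omits `i`, and the
cardinality equality squeezes both sets to `univ.erase i`.
-/

open Finset

namespace Finset

variable {α : Type*} [Fintype α] [DecidableEq α]

theorem eq_univ_erase_of_card_le {s t : Finset α} {i : α} (hi : i ∉ s)
    (ht : univ.erase i ⊆ t) (hcard : #t ≤ #s) :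
    s = univ.erase i ∧ t = univ.erase i := by
  have hs : s ⊆ univ.erase i := fun j hj => mem_erase.mpr ⟨ne_of_mem_of_not_mem hj hi, mem_univ j⟩
  have hle : #(univ.erase i) ≤ #s := (card_le_card ht).trans hcard
  exact ⟨eq_of_subset_of_card_le hs hle,
    (eq_of_subset_of_card_le ht (hcard.trans (card_le_card hs))).symm⟩

theorem eq_and_card_of_card_eq_of_forall_notMem {s t : Finset α} (hcard : #t = #s)
    (hcover : ∀ i ∉ s, ∀ j ≠ i, j ∈ t) :
    t = s ∧ (#s = Fintype.card α - 1 ∨ #s = Fintype.card α) := by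
  by_cases hs : s = univ
  · subst hs
    exact ⟨eq_univ_of_card t (by rw [hcard, card_univ]), Or.inr card_univ⟩
  · obtain ⟨i, hi⟩ : ∃ i, i ∉ s := by simpa [eq_univ_iff_forall] using hs
    have ht : univ.erase i ⊆ t := fun j hj => hcover i hi j (ne_of_mem_erase hj)
    obtain ⟨rfl, rfl⟩ := eq_univ_erase_of_card_le hi ht hcard.le
    exact ⟨rfl, Or.inl (by rw [card_erase_of_mem (mem_univ i), card_univ])⟩

end Finset

/-- `P` is the set of agents whose proposal is held, `S` the set of agents holding a proposal,
`R i j` means that `j` has rejected `i`, and `g` sends each predecessor to the successor holding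
its proposal. -/
theorem terminal_successors_eq_predecessors (n : ℕ)
    (P S : Finset (Fin n)) (R : Fin n → Fin n → Prop) (g : Fin n → Fin n)
    (hinj : Set.InjOn g (P : Set (Fin n)))
    (himg : S = P.image g)
    (hterm : ∀ i : Fin n, i ∉ P → ∀ j : Fin n, j ≠ i → R i j)
    (hheld : ∀ i j : Fin n, R i j → j ∈ S) :
    S = P ∧ (P.card = n - 1 ∨ P.card = n) := by
  have hcard : S.card = P.card := himg ▸ card_image_of_injOn hinj
  have hcover : ∀ i ∉ P, ∀ j ≠ i, j ∈ S := fun i hi j hji => hheld i j (hterm i hi j hji)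
  simpa using eq_and_card_of_card_eq_of_forall_notMem hcard hcover
end

section
/- Let x_i ∈ [0,1] for i ∈ I and z_j ∈ [0,1] for j ∈ J, where I, J are finite sets, and let Π be a bijection of I. Let the product run over pairs (i, j) ∈ I × J with j ≠ i and j ≠ Π⁻¹(i). Then log ∏ (1 − x_i z_j) ≤ −(∑_{i∈I} x_i)(∑_{j∈J} z_j) + 5. -/
/-!
Take logarithms and use `log (1 - u) ≤ -u - u²/2`. Over all of `I × J` the terms `u = xᵢ z_j`
sum to `x(I) z(J)` and their squares to `B = (∑ xᵢ²)(∑ z_j²)`. The excluded pairs lie on the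
graphs of `id` and `π⁻¹`, and by Cauchy–Schwarz each graph carries mass at most `√B`; what
remains is `-x(I) z(J) - B/2 + 3√B ≤ -x(I) z(J) + 9/2`.
-/

open Finset

namespace Real

theorem log_one_sub_le_neg_sub_sq_div_two {u : ℝ} (h0 : 0 ≤ u) (h1 : u < 1) :
    log (1 - u) ≤ -u - u ^ 2 / 2 := by
  have hseries := hasSum_pow_div_log_of_abs_lt_one (abs_lt.2 ⟨by linarith, h1⟩)
  have := sum_le_hasSum (range 2) (fun n _ => by positivity) hseries
  norm_num [sum_range_succ] at this
  linarith

theorem log_prod_one_sub_le_neg_sum_sub_sum_sq {ι : Type*} (s : Finset ι) (u : ι → ℝ)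
    (h0 : ∀ i ∈ s, 0 ≤ u i) (h1 : ∀ i ∈ s, u i < 1) :
    log (∏ i ∈ s, (1 - u i)) ≤ -∑ i ∈ s, u i - (∑ i ∈ s, u i ^ 2) / 2 := by
  rw [log_prod fun i hi => (sub_pos.2 (h1 i hi)).ne', sum_div, ← sum_neg_distrib,
    ← sum_sub_distrib]
  exact sum_le_sum fun i hi => log_one_sub_le_neg_sub_sq_div_two (h0 i hi) (h1 i hi)

end Real

namespace Finset

variable {ι κ M : Type*} [AddCommMonoid M] [PartialOrder M] [IsOrderedAddMonoid M]

theorem sum_comp_le_sum_of_injOn {s : Finset ι} {t : Finset κ} {e : ι → κ}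
    (he : Set.InjOn e s) (hst : Set.MapsTo e s t) {f : κ → M} (hf : ∀ k ∈ t, 0 ≤ f k) :
    ∑ i ∈ s, f (e i) ≤ ∑ k ∈ t, f k := by
  classical
  rw [← sum_image he]
  exact sum_le_sum_of_subset_of_nonneg (image_subset_iff.2 hst) fun k hk _ => hf k hk

theorem sum_filter_or_le [DecidableEq ι] (s : Finset ι) (p q : ι → Prop) [DecidablePred p]
    [DecidablePred q] {f : ι → M} (hf : ∀ i ∈ s, 0 ≤ f i) :
    ∑ i ∈ s with p i ∨ q i, f i ≤ ∑ i ∈ s with p i, f i + ∑ i ∈ s with q i, f i := by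
  rw [filter_or, ← sum_union_inter]
  exact le_add_of_nonneg_right <| sum_nonneg fun i hi => hf i (mem_filter.1 (mem_inter.1 hi).1).1

end Finset

section Graph

variable {α β : Type*} [DecidableEq β] (I : Finset α) (J : Finset β) (x : α → ℝ) (z : β → ℝ)

theorem sum_graph_mul_le_sqrt_mul_sqrt {g : α → β} (hg : Set.InjOn g I) :
    ∑ p ∈ I ×ˢ J with p.2 = g p.1, x p.1 * z p.2
      ≤ √(∑ i ∈ I, x i ^ 2) * √(∑ j ∈ J, z j ^ 2) := by
  set G := {p ∈ I ×ˢ J | p.2 = g p.1}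
  have hG : ∀ p ∈ G, p.1 ∈ I ∧ p.2 ∈ J ∧ p.2 = g p.1 := by
    simp [G, and_assoc]
  have hfst : ∑ p ∈ G, x p.1 ^ 2 ≤ ∑ i ∈ I, x i ^ 2 := by
    refine sum_comp_le_sum_of_injOn (fun p hp q hq h => ?_) (fun p hp => (hG p hp).1)
      fun _ _ => sq_nonneg _
    rw [Prod.ext_iff, (hG p hp).2.2, (hG q hq).2.2, h]
    exact ⟨rfl, rfl⟩
  have hsnd : ∑ p ∈ G, z p.2 ^ 2 ≤ ∑ j ∈ J, z j ^ 2 := by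
    refine sum_comp_le_sum_of_injOn (fun p hp q hq h => ?_) (fun p hp => (hG p hp).2.1)
      fun _ _ => sq_nonneg _
    obtain ⟨hpI, -, hpg⟩ := hG p hp
    obtain ⟨hqI, -, hqg⟩ := hG q hq
    exact Prod.ext (hg hpI hqI (by rw [← hpg, ← hqg]; exact h)) h
  calc ∑ p ∈ G, x p.1 * z p.2 ≤ √(∑ p ∈ G, x p.1 ^ 2) * √(∑ p ∈ G, z p.2 ^ 2) :=
        Real.sum_mul_le_sqrt_mul_sqrt _ _ _
    _ ≤ _ := by gcongr

theorem sum_two_graphs_mul_le_two_mul_sqrt [DecidableEq α] {g₁ g₂ : α → β}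
    (hg₁ : Set.InjOn g₁ I) (hg₂ : Set.InjOn g₂ I) (hx : ∀ i ∈ I, 0 ≤ x i)
    (hz : ∀ j ∈ J, 0 ≤ z j) :
    ∑ p ∈ I ×ˢ J with p.2 = g₁ p.1 ∨ p.2 = g₂ p.1, x p.1 * z p.2
      ≤ 2 * √((∑ i ∈ I, x i ^ 2) * ∑ j ∈ J, z j ^ 2) := by
  have hxz : ∀ p ∈ I ×ˢ J, 0 ≤ x p.1 * z p.2 := fun p hp =>
    mul_nonneg (hx _ (mem_product.1 hp).1) (hz _ (mem_product.1 hp).2)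
  rw [Real.sqrt_mul (sum_nonneg fun _ _ => sq_nonneg _), two_mul]
  exact (sum_filter_or_le _ _ _ hxz).trans <| add_le_add
    (sum_graph_mul_le_sqrt_mul_sqrt I J x z hg₁) (sum_graph_mul_le_sqrt_mul_sqrt I J x z hg₂)

end Graph

theorem log_prod_one_sub_le_general {α : Type*} [DecidableEq α] (I J : Finset α)
    (x z : α → ℝ) (hx : ∀ i ∈ I, x i ∈ Set.Icc (0:ℝ) 1)
    (hz : ∀ j ∈ J, z j ∈ Set.Icc (0:ℝ) 1)
    (hlt : ∀ i ∈ I, ∀ j ∈ J, x i * z j < 1)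
    (π : Equiv.Perm α) :
    Real.log (∏ p ∈ (I ×ˢ J).filter fun p => p.2 ≠ p.1 ∧ p.2 ≠ π.symm p.1,
        (1 - x p.1 * z p.2))
      ≤ -(∑ i ∈ I, x i) * (∑ j ∈ J, z j) + 5 := by
  set u : α × α → ℝ := fun p => x p.1 * z p.2
  set P : α × α → Prop := fun p => p.2 ≠ p.1 ∧ p.2 ≠ π.symm p.1
  have hu : ∀ p ∈ I ×ˢ J, 0 ≤ u p ∧ u p < 1 := fun p hp =>
    have ⟨hp1, hp2⟩ := mem_product.1 hp
    ⟨mul_nonneg (hx _ hp1).1 (hz _ hp2).1, hlt _ hp1 _ hp2⟩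
  set B := (∑ i ∈ I, x i ^ 2) * ∑ j ∈ J, z j ^ 2
  have hsum : ∑ p ∈ I ×ˢ J, u p = (∑ i ∈ I, x i) * ∑ j ∈ J, z j := by
    rw [sum_mul_sum, sum_product]
  have hsum_sq : ∑ p ∈ I ×ˢ J, u p ^ 2 = B := by
    simp only [u, B, mul_pow, sum_mul_sum, sum_product]
  have hexcl : ∑ p ∈ I ×ˢ J with ¬P p, u p ≤ 2 * √B := by
    simp only [P, not_and_or, not_not]
    exact sum_two_graphs_mul_le_two_mul_sqrt I J x z Function.injective_id.injOn
      π.symm.injective.injOn (fun i hi => (hx i hi).1) (fun j hj => (hz j hj).1)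
  have hexcl_sq : ∑ p ∈ I ×ˢ J with ¬P p, u p ^ 2 ≤ ∑ p ∈ I ×ˢ J with ¬P p, u p :=
    sum_le_sum fun p hp =>
      have ⟨h0, h1⟩ := hu p (mem_filter.1 hp).1
      by nlinarith
  have hlog := Real.log_prod_one_sub_le_neg_sum_sub_sum_sq {p ∈ I ×ˢ J | P p} u
    (fun p hp => (hu p (mem_filter.1 hp).1).1) (fun p hp => (hu p (mem_filter.1 hp).1).2)
  rw [← sum_filter_add_sum_filter_not (I ×ˢ J) P] at hsum hsum_sq
  nlinarith [sq_nonneg (√B - 3), Real.sq_sqrt (show 0 ≤ B by positivity)]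

/-- For `xᵢ, z_j ∈ [0,1]` (with `xᵢ z_j < 1`), finite index sets `I, J`, and a
permutation `π` mapping `I` into itself, the product over pairs `(i,j) ∈ I × J` with
`j ≠ i` and `j ≠ π⁻¹(i)` satisfies
`log ∏ (1 - xᵢ z_j) ≤ -(∑_{i∈I} xᵢ)(∑_{j∈J} z_j) + 5`. -/
theorem log_prod_one_sub_le {α : Type*} [DecidableEq α] (I J : Finset α)
    (x z : α → ℝ) (hx : ∀ i ∈ I, x i ∈ Set.Icc (0:ℝ) 1)
    (hz : ∀ j ∈ J, z j ∈ Set.Icc (0:ℝ) 1)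
    (hlt : ∀ i ∈ I, ∀ j ∈ J, x i * z j < 1)
    (π : Equiv.Perm α) (hπ : ∀ a ∈ I, π a ∈ I) :
    Real.log (∏ p ∈ (I ×ˢ J).filter fun p => p.2 ≠ p.1 ∧ p.2 ≠ π.symm p.1,
        (1 - x p.1 * z p.2))
      ≤ -(∑ i ∈ I, x i) * (∑ j ∈ J, z j) + 5 :=
  log_prod_one_sub_le_general I J x z hx hz hlt π
end
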